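/- For y ~ N(μ, B), the density-power-divergence estimating equations are unbiased: E[(y − μ) s(y)/B] = 0 and E[ (y − μ)² s(y)/B² − s(y)/B + α V^α/((α+1)^{3/2} B) ] = 0. -/

import Mathlib

open MeasureTheory Real Filter Set


lemma gauss_odd (b : ℝ) : ∫ x : ℝ, x * Real.exp (-b * x ^ 2) = 0 := by
  have h := integral_neg_eq_self (fun x : ℝ => x * Real.exp (-b * x ^ 2)) (volume : Measure ℝ)
  have e : (fun x : ℝ => (-x) * Real.exp (-b * (-x) ^ 2))
      = fun x : ℝ => -(x * Real.exp (-b * x ^ 2)) := by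
    funext x; rw [neg_sq]; ring
  rw [e, integral_neg] at h
  linarith

lemma integrable_sq_exp {b : ℝ} (hb : 0 < b) :
    Integrable (fun x : ℝ => x ^ 2 * Real.exp (-b * x ^ 2)) := by
  have h := integrable_rpow_mul_exp_neg_mul_sq hb (s := 2) (by norm_num)
  have : ∀ x : ℝ, x ^ (2 : ℝ) = x ^ (2 : ℕ) := fun x => by
    rw [← Real.rpow_natCast x 2]; norm_num
  simpa [this] using h

lemma gauss_sq {b : ℝ} (hb : 0 < b) :
    ∫ x : ℝ, x ^ 2 * Real.exp (-b * x ^ 2) = Real.sqrt (π / b) / (2 * b) := by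
  have hint2 := integrable_sq_exp hb
  have hinte := integrable_exp_neg_mul_sq hb
  -- half-line computation by FTC
  have hderiv : ∀ x ∈ Ici (0:ℝ), HasDerivAt
      (fun x : ℝ => -(2*b)⁻¹ * (x * Real.exp (-b * x ^ 2)))
      (x ^ 2 * Real.exp (-b * x ^ 2) - (2*b)⁻¹ * Real.exp (-b * x ^ 2)) x := by
    intro x _
    have h1 : HasDerivAt (fun x : ℝ => x * Real.exp (-b * x ^ 2))
        (Real.exp (-b * x ^ 2) + x * (Real.exp (-b * x ^ 2) * (-b * (2 * x)))) x := by
      have hexp : HasDerivAt (fun x : ℝ => Real.exp (-b * x ^ 2))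
          (Real.exp (-b * x ^ 2) * (-b * (2 * x))) x := by
        have := ((hasDerivAt_pow 2 x).const_mul (-b)).exp
        simpa [mul_comm, mul_assoc, mul_left_comm] using this
      exact ((hasDerivAt_id' x).mul hexp).congr_deriv (by ring)
    have := h1.const_mul (-(2*b)⁻¹)
    refine this.congr_deriv ?_
    have hb' : (2*b)⁻¹ * (2*b) = 1 := inv_mul_cancel₀ (by positivity)
    linear_combination (x ^ 2 * Real.exp (-b * x ^ 2)) * hb'
  have htend : Tendsto (fun x : ℝ => -(2*b)⁻¹ * (x * Real.exp (-b * x ^ 2))) atTop (nhds 0) := by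
    have hlo := rpow_mul_exp_neg_mul_sq_isLittleO_exp_neg hb 1
    have hg : Tendsto (fun x : ℝ => Real.exp (-(1/2) * x)) atTop (nhds 0) := by
      have h1 : Tendsto (fun x : ℝ => (1/2) * x) atTop atTop :=
        Tendsto.const_mul_atTop (by norm_num) tendsto_id
      have := Real.tendsto_exp_neg_atTop_nhds_zero.comp h1
      simpa [Function.comp_def, neg_mul] using this
    have h0 : Tendsto (fun x : ℝ => x ^ (1:ℝ) * Real.exp (-b * x ^ 2)) atTop (nhds 0) :=
      hlo.trans_tendsto hg
    simp only [Real.rpow_one] at h0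
    simpa using h0.const_mul (-(2*b)⁻¹)
  have hsub : IntegrableOn (fun x : ℝ =>
      x ^ 2 * Real.exp (-b * x ^ 2) - (2*b)⁻¹ * Real.exp (-b * x ^ 2)) (Ioi (0:ℝ)) :=
    (hint2.sub (hinte.const_mul _)).integrableOn
  have hftc := integral_Ioi_of_hasDerivAt_of_tendsto'
    (fun x hx => hderiv x hx) hsub htend
  simp only [mul_zero, zero_mul, Real.exp_zero, mul_one, sub_zero, zero_pow] at hftc
  -- hftc : ∫ x in Ioi 0, (x^2 exp - (2b)⁻¹ exp) = 0 - 0 = 0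
  have hIoi : ∫ x in Ioi (0:ℝ), x ^ 2 * Real.exp (-b * x ^ 2)
      = (2*b)⁻¹ * (Real.sqrt (π / b) / 2) := by
    have hsplit : ∫ x in Ioi (0:ℝ), (x ^ 2 * Real.exp (-b * x ^ 2)
        - (2*b)⁻¹ * Real.exp (-b * x ^ 2))
        = (∫ x in Ioi (0:ℝ), x ^ 2 * Real.exp (-b * x ^ 2))
          - ∫ x in Ioi (0:ℝ), (2*b)⁻¹ * Real.exp (-b * x ^ 2) :=
      integral_sub hint2.integrableOn ((hinte.const_mul _).integrableOn)
    rw [hsplit] at hftc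
    rw [sub_eq_zero] at hftc
    rw [hftc, integral_const_mul, integral_gaussian_Ioi]
  have hIic : ∫ x in Iic (0:ℝ), x ^ 2 * Real.exp (-b * x ^ 2)
      = ∫ x in Ioi (0:ℝ), x ^ 2 * Real.exp (-b * x ^ 2) := by
    have := integral_comp_neg_Ioi (0:ℝ) (fun x => x ^ 2 * Real.exp (-b * x ^ 2))
    simp only [neg_sq, neg_zero] at this
    exact this.symm
  have htot := intervalIntegral.integral_Iic_add_Ioi (b := (0:ℝ))
    hint2.integrableOn hint2.integrableOn
  rw [← htot, hIic, hIoi]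
  field_simp
  ring

/-- Unbiasedness of the density-power-divergence estimating equations for
`y ~ N(μ, B)`: `E[(y − μ)s(y)/B] = 0` and
`E[(y − μ)²s(y)/B² − s(y)/B + αV^α/((α+1)^{3/2}B)] = 0`. -/
theorem dpd_estimating_equations_unbiased
    (μ B α : ℝ) (hB : 0 < B) (hα : 0 < α)
    (V : ℝ) (hV : V = (2 * π * B) ^ (-(1/2) : ℝ))
    (f s : ℝ → ℝ)
    (hf : ∀ y, f y = V * Real.exp (-(y - μ) ^ 2 / (2 * B)))
    (hs : ∀ y, s y = V ^ α * Real.exp (-α * (y - μ) ^ 2 / (2 * B))) :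
    (∫ y : ℝ, f y * ((y - μ) * s y / B)) = 0 ∧
    (∫ y : ℝ, f y * ((y - μ) ^ 2 * s y / B ^ 2 - s y / B
        + α * V ^ α / ((α + 1) ^ ((3 : ℝ)/2) * B))) = 0 := by
  have h2πB : (0:ℝ) < 2 * π * B := by positivity
  have hV0 : 0 < V := by rw [hV]; positivity
  set c : ℝ := (α + 1) / (2 * B) with hc_def
  have hc : 0 < c := by positivity
  have hb2 : (0:ℝ) < 1 / (2 * B) := by positivity
  -- product f * s
  have hfs : ∀ y : ℝ, f y * s y = V ^ (α + 1) * Real.exp (-c * (y - μ) ^ 2) := by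
    intro y
    have hE : Real.exp (-(y - μ) ^ 2 / (2 * B)) * Real.exp (-α * (y - μ) ^ 2 / (2 * B))
        = Real.exp (-c * (y - μ) ^ 2) := by
      rw [← Real.exp_add]; congr 1; rw [hc_def]; field_simp; ring
    rw [hf, hs, Real.rpow_add hV0, Real.rpow_one]
    calc V * Real.exp (-(y - μ) ^ 2 / (2 * B)) * (V ^ α * Real.exp (-α * (y - μ) ^ 2 / (2 * B)))
        = V ^ α * V * (Real.exp (-(y - μ) ^ 2 / (2 * B))
          * Real.exp (-α * (y - μ) ^ 2 / (2 * B))) := by ring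
      _ = V ^ α * V * Real.exp (-c * (y - μ) ^ 2) := by rw [hE]
  constructor
  · have heq : ∀ y : ℝ, f y * ((y - μ) * s y / B)
        = (V ^ (α + 1) / B) * ((y - μ) * Real.exp (-c * (y - μ) ^ 2)) := by
      intro y
      have e1 : f y * ((y - μ) * s y / B) = (f y * s y) * ((y - μ) / B) := by ring
      rw [e1, hfs y]; ring
    simp_rw [heq]
    rw [MeasureTheory.integral_const_mul]
    rw [integral_sub_right_eq_self (μ := volume)
      (fun x : ℝ => x * Real.exp (-c * x ^ 2)) μ]
    rw [gauss_odd c, mul_zero]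
  · set K : ℝ := α * V ^ α / ((α + 1) ^ ((3:ℝ)/2) * B) with hK_def
    have heq : ∀ y : ℝ, f y * ((y - μ) ^ 2 * s y / B ^ 2 - s y / B + K)
        = (V ^ (α + 1) / B ^ 2) * ((y - μ) ^ 2 * Real.exp (-c * (y - μ) ^ 2))
          - (V ^ (α + 1) / B) * Real.exp (-c * (y - μ) ^ 2)
          + (K * V) * Real.exp (-(1 / (2 * B)) * (y - μ) ^ 2) := by
      intro y
      have h2 : f y = V * Real.exp (-(1 / (2 * B)) * (y - μ) ^ 2) := by
        rw [hf]; congr 2; field_simp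
      have e1 : f y * ((y - μ) ^ 2 * s y / B ^ 2 - s y / B + K)
          = (f y * s y) * ((y - μ) ^ 2 / B ^ 2) - (f y * s y) / B + K * f y := by ring
      rw [e1, hfs y, h2]; ring
    simp_rw [heq]
    -- integrability of shifted pieces
    have i1 : Integrable (fun y : ℝ =>
        (V ^ (α + 1) / B ^ 2) * ((y - μ) ^ 2 * Real.exp (-c * (y - μ) ^ 2))) := by
      exact (((integrable_sq_exp hc).comp_sub_right μ).const_mul _)
    have i2 : Integrable (fun y : ℝ =>
        (V ^ (α + 1) / B) * Real.exp (-c * (y - μ) ^ 2)) := by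
      exact (((integrable_exp_neg_mul_sq hc).comp_sub_right μ).const_mul _)
    have i3 : Integrable (fun y : ℝ =>
        (K * V) * Real.exp (-(1 / (2 * B)) * (y - μ) ^ 2)) := by
      exact (((integrable_exp_neg_mul_sq hb2).comp_sub_right μ).const_mul _)
    have i12 : Integrable (fun y : ℝ =>
        (V ^ (α + 1) / B ^ 2) * ((y - μ) ^ 2 * Real.exp (-c * (y - μ) ^ 2))
          - (V ^ (α + 1) / B) * Real.exp (-c * (y - μ) ^ 2)) := i1.sub i2
    rw [MeasureTheory.integral_add i12 i3, MeasureTheory.integral_sub i1 i2,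
      MeasureTheory.integral_const_mul, MeasureTheory.integral_const_mul,
      MeasureTheory.integral_const_mul]
    rw [integral_sub_right_eq_self (μ := volume)
      (fun x : ℝ => x ^ 2 * Real.exp (-c * x ^ 2)) μ,
      integral_sub_right_eq_self (μ := volume)
      (fun x : ℝ => Real.exp (-c * x ^ 2)) μ,
      integral_sub_right_eq_self (μ := volume)
      (fun x : ℝ => Real.exp (-(1 / (2 * B)) * x ^ 2)) μ]
    rw [gauss_sq hc, integral_gaussian, integral_gaussian]
    -- now pure algebra
    have ha : (0:ℝ) < α + 1 := by linarith
    set r : ℝ := Real.sqrt (α + 1) with hr_def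
    have hr : 0 < r := Real.sqrt_pos.mpr ha
    have hr2 : r ^ 2 = α + 1 := Real.sq_sqrt ha.le
    set t : ℝ := Real.sqrt (2 * π * B) with ht_def
    have ht : 0 < t := Real.sqrt_pos.mpr h2πB
    have ht2 : t ^ 2 = 2 * π * B := Real.sq_sqrt h2πB.le
    have hVt : V * t = 1 := by
      rw [hV, ht_def, Real.sqrt_eq_rpow, ← Real.rpow_add h2πB]
      norm_num
    have h32 : (α + 1) ^ ((3:ℝ)/2) = (α + 1) * r := by
      have : ((3:ℝ)/2) = 1 + 1/2 := by norm_num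
      rw [this, Real.rpow_add ha, Real.rpow_one, hr_def, Real.sqrt_eq_rpow]
    have hs1 : Real.sqrt (π / c) = t / r := by
      have hpc : π / c = (2 * π * B) / (α + 1) := by
        rw [hc_def]; field_simp
      rw [hpc, ht_def, hr_def, Real.sqrt_div h2πB.le]
    have hs2 : Real.sqrt (π / (1 / (2 * B))) = t := by
      rw [ht_def]; congr 1; field_simp
    have hVa : V ^ (α + 1) = V ^ α * V := by
      rw [Real.rpow_add hV0, Real.rpow_one]
    have hVdef : V = 1 / t := eq_div_of_mul_eq ht.ne' hVt
    rw [hs1, hs2, hVa, hK_def, h32, hc_def, hVdef]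
    have ha' : α + 1 ≠ 0 := ha.ne'
    field_simp
    ring
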